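/- Consider the generalized random coefficients model: y₀ = Z₀α₀ + X₀β₀ + ε₀ and y₁ = W₁α₁ + X₁β₁ + ε₁, where Z₀ is a real n₀×k₀ matrix with Z₀ᵀZ₀ invertible, W₁ is a real n₁×k₁ matrix with W₁ᵀW₁ invertible, X₀ (n₀×k) and X₁ (n₁×k) are real matrices, α₀ ∈ ℝ^{k₀}, α₁ ∈ ℝ^{k₁}, β₀ ∈ ℝᵏ are fixed, and β₁ = β₀ + η. Set M₀ = I − Z₀(Z₀ᵀZ₀)⁻¹Z₀ᵀ, M₁ = I − W₁(W₁ᵀW₁)⁻¹W₁ᵀ, X̃₀ = M₀X₀, X̃₁ = M₁X₁, and assume X̃₀ᵀX̃₀ is invertible. The random vectors ε₀ : Ω → ℝ^{n₀}, ε₁ : Ω → ℝ^{n₁}, η : Ω → ℝᵏ are square-integrable with entrywise mean zero, covariance matrices σ₀²·I, σ₁²·I, σ_η²·I respectively, and all cross products between distinct vectors have zero expectation. Define β̂₀ = (X̃₀ᵀX̃₀)⁻¹X̃₀ᵀy₀, α̂₁ = (W₁ᵀW₁)⁻¹W₁ᵀ(y₁ − X₁β̂₀), and ŷ_{1|0}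 = W₁α̂₁ + X₁β̂₀. Then (1/n₁)·E[(y₁ − ŷ_{1|0})ᵀ(y₁ − ŷ_{1|0})] = ((n₁ − k₁)/n₁)·σ₁² + (σ_η²/n₁)·tr(X̃₁ᵀX̃₁) + (σ₀²/n₁)·tr((X̃₀ᵀX̃₀)⁻¹X̃₁ᵀX̃₁). -/

import Mathlib

open Matrix MeasureTheory

lemma memL2_integrable_mul {Ω : Type*} [MeasurableSpace Ω] {μ : Measure Ω}
    {f g : Ω → ℝ} (hf : MemLp f 2 μ) (hg : MemLp g 2 μ) :
    Integrable (fun ω => f ω * g ω) μ := by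
  have h : (fun ω => f ω * g ω)
      = fun ω => ((f ω + g ω) ^ 2 - f ω ^ 2 - g ω ^ 2) / 2 := by
    funext ω; ring
  rw [h]
  exact (((hf.add hg).integrable_sq.sub hf.integrable_sq).sub hg.integrable_sq).div_const 2

lemma exp_quadratic {Ω : Type*} [MeasurableSpace Ω] (μ : Measure Ω) [IsProbabilityMeasure μ]
    {ι κ : Type*} [Fintype ι] [DecidableEq ι] [Fintype κ]
    (T : Matrix κ ι ℝ) (ξ : Ω → ι → ℝ) (v : ι → ℝ)
    (hL2 : ∀ j, MemLp (fun ω => ξ ω j) 2 μ)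
    (hcov : ∀ j l, ∫ ω, ξ ω j * ξ ω l ∂μ = if j = l then v j else 0) :
    ∫ ω, (T *ᵥ ξ ω) ⬝ᵥ (T *ᵥ ξ ω) ∂μ = ∑ j, v j * ∑ i, (T i j) ^ 2 := by
  have hptw : ∀ ω, (T *ᵥ ξ ω) ⬝ᵥ (T *ᵥ ξ ω)
      = ∑ i, ∑ j, ∑ l, T i j * T i l * (ξ ω j * ξ ω l) := by
    intro ω
    simp only [dotProduct, mulVec, dotProduct, Finset.sum_mul_sum]
    refine Finset.sum_congr rfl fun i _ => Finset.sum_congr rfl fun j _ =>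
      Finset.sum_congr rfl fun l _ => by ring
  simp_rw [hptw]
  have hint : ∀ (i : κ) (j l : ι),
      Integrable (fun ω => T i j * T i l * (ξ ω j * ξ ω l)) μ :=
    fun i j l => (memL2_integrable_mul (hL2 j) (hL2 l)).const_mul _
  rw [integral_finset_sum _ (fun i _ => integrable_finset_sum _ (fun j _ =>
    integrable_finset_sum _ (fun l _ => hint i j l)))]
  simp_rw [integral_finset_sum _ (fun j _ => integrable_finset_sum _ (fun l _ => hint _ j l)),
    integral_finset_sum _ (fun l _ => hint _ _ l), integral_const_mul, hcov]
  rw [Finset.sum_comm]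
  refine Finset.sum_congr rfl fun j _ => ?_
  rw [Finset.mul_sum]
  refine Finset.sum_congr rfl fun i _ => ?_
  rw [Finset.sum_eq_single j]
  · simp; ring
  · intro l _ hl; simp [Ne.symm hl]
  · simp

/-- Prediction error formula for the generalized random coefficients model
(Proposition 2 of MacEachern–Miyawaki, "On the two-dataset problem"). -/
theorem generalized_rcm_prediction_error
    {Ω : Type*} [MeasurableSpace Ω] (μ : Measure Ω) [IsProbabilityMeasure μ]
    {n₀ n₁ k₀ k₁ k : ℕ} (hn₁ : 0 < n₁)
    (Z₀ : Matrix (Fin n₀) (Fin k₀) ℝ) (W₁ : Matrix (Fin n₁) (Fin k₁) ℝ)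
    (X₀ : Matrix (Fin n₀) (Fin k) ℝ) (X₁ : Matrix (Fin n₁) (Fin k) ℝ)
    (hZ₀ : IsUnit (Z₀ᵀ * Z₀).det) (hW₁ : IsUnit (W₁ᵀ * W₁).det)
    (M₀ : Matrix (Fin n₀) (Fin n₀) ℝ) (hM₀ : M₀ = 1 - Z₀ * (Z₀ᵀ * Z₀)⁻¹ * Z₀ᵀ)
    (M₁ : Matrix (Fin n₁) (Fin n₁) ℝ) (hM₁ : M₁ = 1 - W₁ * (W₁ᵀ * W₁)⁻¹ * W₁ᵀ)
    (X₀t : Matrix (Fin n₀) (Fin k) ℝ) (hX₀t : X₀t = M₀ * X₀)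
    (X₁t : Matrix (Fin n₁) (Fin k) ℝ) (hX₁t : X₁t = M₁ * X₁)
    (hX₀tX₀t : IsUnit (X₀tᵀ * X₀t).det)
    (α₀ : Fin k₀ → ℝ) (α₁ : Fin k₁ → ℝ) (β₀ : Fin k → ℝ)
    (ε₀ : Ω → Fin n₀ → ℝ) (ε₁ : Ω → Fin n₁ → ℝ) (η : Ω → Fin k → ℝ)
    (σ₀ σ₁ ση : ℝ)
    (hε₀L2 : ∀ i, MemLp (fun ω => ε₀ ω i) 2 μ)
    (hε₁L2 : ∀ i, MemLp (fun ω => ε₁ ω i) 2 μ)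
    (hηL2 : ∀ l, MemLp (fun ω => η ω l) 2 μ)
    (hε₀m : ∀ i, ∫ ω, ε₀ ω i ∂μ = 0)
    (hε₁m : ∀ i, ∫ ω, ε₁ ω i ∂μ = 0)
    (hηm : ∀ l, ∫ ω, η ω l ∂μ = 0)
    (hε₀v : ∀ i i', ∫ ω, ε₀ ω i * ε₀ ω i' ∂μ = if i = i' then σ₀ ^ 2 else 0)
    (hε₁v : ∀ i i', ∫ ω, ε₁ ω i * ε₁ ω i' ∂μ = if i = i' then σ₁ ^ 2 else 0)
    (hηv : ∀ l l', ∫ ω, η ω l * η ω l' ∂μ = if l = l' then ση ^ 2 else 0)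
    (hc01 : ∀ i j, ∫ ω, ε₀ ω i * ε₁ ω j ∂μ = 0)
    (hc0η : ∀ i l, ∫ ω, ε₀ ω i * η ω l ∂μ = 0)
    (hc1η : ∀ j l, ∫ ω, ε₁ ω j * η ω l ∂μ = 0)
    (y₀ : Ω → Fin n₀ → ℝ) (hy₀ : ∀ ω, y₀ ω = Z₀ *ᵥ α₀ + X₀ *ᵥ β₀ + ε₀ ω)
    (y₁ : Ω → Fin n₁ → ℝ) (hy₁ : ∀ ω, y₁ ω = W₁ *ᵥ α₁ + X₁ *ᵥ (β₀ + η ω) + ε₁ ω)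
    (βhat : Ω → Fin k → ℝ)
    (hβhat : ∀ ω, βhat ω = (X₀tᵀ * X₀t)⁻¹ *ᵥ (X₀tᵀ *ᵥ y₀ ω))
    (αhat : Ω → Fin k₁ → ℝ)
    (hαhat : ∀ ω, αhat ω = (W₁ᵀ * W₁)⁻¹ *ᵥ (W₁ᵀ *ᵥ (y₁ ω - X₁ *ᵥ βhat ω)))
    (yhat : Ω → Fin n₁ → ℝ)
    (hyhat : ∀ ω, yhat ω = W₁ *ᵥ αhat ω + X₁ *ᵥ βhat ω) :
    (1 / (n₁ : ℝ)) * ∫ ω, (y₁ ω - yhat ω) ⬝ᵥ (y₁ ω - yhat ω) ∂μ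
      = ((n₁ : ℝ) - (k₁ : ℝ)) / (n₁ : ℝ) * σ₁ ^ 2
        + ση ^ 2 / (n₁ : ℝ) * (X₁tᵀ * X₁t).trace
        + σ₀ ^ 2 / (n₁ : ℝ) * ((X₀tᵀ * X₀t)⁻¹ * (X₁tᵀ * X₁t)).trace := by
  have hZinv : (Z₀ᵀ * Z₀)⁻¹ * (Z₀ᵀ * Z₀) = 1 := nonsing_inv_mul _ hZ₀
  have hWinv : (W₁ᵀ * W₁)⁻¹ * (W₁ᵀ * W₁) = 1 := nonsing_inv_mul _ hW₁
  set S : Matrix (Fin k) (Fin k) ℝ := (X₀tᵀ * X₀t)⁻¹ with hSdef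
  have hS : S * (X₀tᵀ * X₀t) = 1 := nonsing_inv_mul _ hX₀tX₀t
  have hSsym : Sᵀ = S := by
    rw [hSdef, transpose_nonsing_inv, transpose_mul, transpose_transpose]
  have hM₀Z : M₀ * Z₀ = 0 := by
    have h : Z₀ * (Z₀ᵀ * Z₀)⁻¹ * Z₀ᵀ * Z₀ = Z₀ := by
      rw [Matrix.mul_assoc, Matrix.mul_assoc, hZinv, Matrix.mul_one]
    rw [hM₀, Matrix.sub_mul, Matrix.one_mul, h, sub_self]
  have hM₁W : M₁ * W₁ = 0 := by
    have h : W₁ * (W₁ᵀ * W₁)⁻¹ * W₁ᵀ * W₁ = W₁ := by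
      rw [Matrix.mul_assoc, Matrix.mul_assoc, hWinv, Matrix.mul_one]
    rw [hM₁, Matrix.sub_mul, Matrix.one_mul, h, sub_self]
  have hM₀sym : M₀ᵀ = M₀ := by
    simp [hM₀, transpose_sub, transpose_mul, transpose_nonsing_inv, transpose_transpose,
      Matrix.mul_assoc]
  have hM₁sym : M₁ᵀ = M₁ := by
    simp [hM₁, transpose_sub, transpose_mul, transpose_nonsing_inv, transpose_transpose,
      Matrix.mul_assoc]
  have hM₀P : M₀ * (Z₀ * (Z₀ᵀ * Z₀)⁻¹ * Z₀ᵀ) = 0 := by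
    rw [show Z₀ * (Z₀ᵀ * Z₀)⁻¹ * Z₀ᵀ = Z₀ * ((Z₀ᵀ * Z₀)⁻¹ * Z₀ᵀ) from by
      rw [Matrix.mul_assoc], ← Matrix.mul_assoc, hM₀Z, Matrix.zero_mul]
  have hM₁P : M₁ * (W₁ * (W₁ᵀ * W₁)⁻¹ * W₁ᵀ) = 0 := by
    rw [show W₁ * (W₁ᵀ * W₁)⁻¹ * W₁ᵀ = W₁ * ((W₁ᵀ * W₁)⁻¹ * W₁ᵀ) from by
      rw [Matrix.mul_assoc], ← Matrix.mul_assoc, hM₁W, Matrix.zero_mul]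
  have hM₀idem : M₀ * M₀ = M₀ := by
    nth_rewrite 2 [hM₀]
    rw [Matrix.mul_sub, Matrix.mul_one, hM₀P, sub_zero]
  have hM₁idem : M₁ * M₁ = M₁ := by
    nth_rewrite 2 [hM₁]
    rw [Matrix.mul_sub, Matrix.mul_one, hM₁P, sub_zero]
  have hX₀tZ : X₀tᵀ * Z₀ = 0 := by
    rw [hX₀t, transpose_mul, hM₀sym, Matrix.mul_assoc, hM₀Z, Matrix.mul_zero]
  have hX₀tX : X₀tᵀ * X₀ = X₀tᵀ * X₀t := by
    have h : X₀ᵀ * M₀ * (M₀ * X₀) = X₀ᵀ * M₀ * X₀ := by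
      rw [← Matrix.mul_assoc, Matrix.mul_assoc X₀ᵀ M₀ M₀, hM₀idem]
    rw [hX₀t, transpose_mul, hM₀sym]
    exact h.symm
  -- βhat in terms of ε₀
  have hβ : ∀ ω, βhat ω = β₀ + (S * X₀tᵀ) *ᵥ ε₀ ω := by
    intro ω
    rw [hβhat, hy₀]
    simp only [mulVec_add, mulVec_mulVec, hX₀tZ, hX₀tX, Matrix.zero_mulVec, zero_add,
      ← Matrix.mul_assoc, hS, Matrix.one_mulVec]
  set R : Matrix (Fin n₁) (Fin n₀) ℝ := -(X₁t * (S * X₀tᵀ)) with hRdef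
  have hstep1 : ∀ ω, y₁ ω - yhat ω = M₁ *ᵥ (y₁ ω - X₁ *ᵥ βhat ω) := by
    intro ω
    rw [hyhat, hαhat, hM₁]
    simp only [mulVec_mulVec, Matrix.sub_mulVec, Matrix.one_mulVec, Matrix.mul_assoc]
    abel
  have hstep2 : ∀ ω, y₁ ω - X₁ *ᵥ βhat ω
      = W₁ *ᵥ α₁ + (X₁ *ᵥ η ω + (ε₁ ω - (X₁ * (S * X₀tᵀ)) *ᵥ ε₀ ω)) := by
    intro ω
    rw [hy₁, hβ ω]
    simp only [mulVec_add, mulVec_mulVec]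
    abel
  have hM₁XS : M₁ * (X₁ * (S * X₀tᵀ)) = X₁t * (S * X₀tᵀ) := by
    rw [← Matrix.mul_assoc, ← hX₁t]
  have hres : ∀ ω, y₁ ω - yhat ω
      = M₁ *ᵥ ε₁ ω + (X₁t *ᵥ η ω + R *ᵥ ε₀ ω) := by
    intro ω
    rw [hstep1 ω, hstep2 ω]
    simp only [mulVec_add, Matrix.mulVec_sub, mulVec_mulVec, hM₁W, Matrix.zero_mulVec,
      zero_add, ← hX₁t, hM₁XS, hRdef, Matrix.neg_mulVec]
    abel
  -- stacked noise vector
  have hTξ : ∀ ω, y₁ ω - yhat ω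
      = fromCols M₁ (fromCols X₁t R) *ᵥ Sum.elim (ε₁ ω) (Sum.elim (η ω) (ε₀ ω)) := by
    intro ω
    rw [hres ω, fromCols_mulVec_sumElim, fromCols_mulVec_sumElim]
  have hL2 : ∀ j, MemLp
      (fun ω => Sum.elim (ε₁ ω) (Sum.elim (η ω) (ε₀ ω)) j) 2 μ := by
    rintro (j | l | j)
    · exact hε₁L2 j
    · exact hηL2 l
    · exact hε₀L2 j
  have hcov : ∀ j l, ∫ ω, Sum.elim (ε₁ ω) (Sum.elim (η ω) (ε₀ ω)) j
        * Sum.elim (ε₁ ω) (Sum.elim (η ω) (ε₀ ω)) l ∂μ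
      = if j = l then Sum.elim (fun _ => σ₁ ^ 2)
          (Sum.elim (fun _ => ση ^ 2) (fun _ => σ₀ ^ 2)) j else 0 := by
    rintro (j | l | j) (j' | l' | j') <;>
      simp only [Sum.elim_inl, Sum.elim_inr]
    · rw [hε₁v]; by_cases h : j = j' <;> simp [h]
    · simpa using hc1η j l'
    · simpa [mul_comm] using hc01 j' j
    · simpa [mul_comm] using hc1η j' l
    · rw [hηv]; by_cases h : l = l' <;> simp [h]
    · simpa [mul_comm] using hc0η j' l
    · simpa using hc01 j j'
    · simpa using hc0η j l'
    · rw [hε₀v]; by_cases h : j = j' <;> simp [h]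
  have key : ∫ ω, (y₁ ω - yhat ω) ⬝ᵥ (y₁ ω - yhat ω) ∂μ
      = ∑ j, Sum.elim (fun _ => σ₁ ^ 2) (Sum.elim (fun _ => ση ^ 2) (fun _ => σ₀ ^ 2)) j
          * ∑ i, (fromCols M₁ (fromCols X₁t R) i j) ^ 2 := by
    simp_rw [hTξ]
    exact exp_quadratic μ _ _ _ hL2 hcov
  have hsum : (∑ j, Sum.elim (fun _ => σ₁ ^ 2) (Sum.elim (fun _ => ση ^ 2) (fun _ => σ₀ ^ 2)) j
          * ∑ i, (fromCols M₁ (fromCols X₁t R) i j) ^ 2)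
      = σ₁ ^ 2 * (∑ j, ∑ i, (M₁ i j) ^ 2) + ση ^ 2 * (∑ l, ∑ i, (X₁t i l) ^ 2)
        + σ₀ ^ 2 * (∑ j, ∑ i, (R i j) ^ 2) := by
    rw [Fintype.sum_sum_type, Fintype.sum_sum_type]
    simp only [Sum.elim_inl, Sum.elim_inr, fromCols_apply_inl, fromCols_apply_inr,
      ← Finset.mul_sum]
    ring
  have hM₁trace : M₁.trace = (n₁ : ℝ) - (k₁ : ℝ) := by
    rw [hM₁, trace_sub, Matrix.mul_assoc, trace_mul_comm, Matrix.mul_assoc, hWinv]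
    simp
  have t1 : (∑ j, ∑ i, (M₁ i j) ^ 2) = (n₁ : ℝ) - (k₁ : ℝ) := by
    have h : (∑ j, ∑ i, (M₁ i j) ^ 2) = (M₁ᵀ * M₁).trace := by
      simp [Matrix.trace, Matrix.diag, Matrix.mul_apply, Matrix.transpose_apply, pow_two]
    rw [h, hM₁sym, hM₁idem, hM₁trace]
  have t2 : (∑ l, ∑ i, (X₁t i l) ^ 2) = (X₁tᵀ * X₁t).trace := by
    simp [Matrix.trace, Matrix.diag, Matrix.mul_apply, Matrix.transpose_apply, pow_two]
  have hcc : ∀ C : Matrix (Fin k) (Fin n₁) ℝ, S * (X₀tᵀ * (X₀t * C)) = C := by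
    intro C
    rw [← Matrix.mul_assoc, ← Matrix.mul_assoc, Matrix.mul_assoc S, hS, Matrix.one_mul]
  have hmid : (X₁t * (S * X₀tᵀ)) * (X₁t * (S * X₀tᵀ))ᵀ = X₁t * (S * X₁tᵀ) := by
    rw [transpose_mul, transpose_mul, transpose_transpose, hSsym]
    simp only [Matrix.mul_assoc]
    rw [hcc]
  have t3 : (∑ j, ∑ i, (R i j) ^ 2) = (S * (X₁tᵀ * X₁t)).trace := by
    have h : (∑ j, ∑ i, (R i j) ^ 2) = (Rᵀ * R).trace := by
      simp [Matrix.trace, Matrix.diag, Matrix.mul_apply, Matrix.transpose_apply, pow_two]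
    rw [h, trace_mul_comm, hRdef, transpose_neg, Matrix.neg_mul, Matrix.mul_neg, neg_neg,
      hmid, trace_mul_comm, Matrix.mul_assoc]
  rw [key, hsum, t1, t2, t3]
  have hn : (n₁ : ℝ) ≠ 0 := Nat.cast_ne_zero.mpr hn₁.ne'
  field_simp
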